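/- Suppose that for every positive integer n, n·1_R is not a zero divisor in R. If p ∈ R[X_1,…,X_N] is harmonic (Δp = 0) and p is a multiple of X·X (i.e., p = (X·X)·q for some q ∈ R[X_1,…,X_N]), then p = 0. -/

import Mathlib

open MvPolynomial

/-- The rotation generator `M_{jk} p = X_j ∂_k p − X_k ∂_j p`. -/
noncomputable def rot {R : Type*} [CommRing R] {N : ℕ} (j k : Fin N)
    (p : MvPolynomial (Fin N) R) : MvPolynomial (Fin N) R :=
  X j * pderiv k p - X k * pderiv j p

/-- The Laplacian `Δ p = Σ_j ∂_j² p`. -/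
noncomputable def lap {R : Type*} [CommRing R] {N : ℕ}
    (p : MvPolynomial (Fin N) R) : MvPolynomial (Fin N) R :=
  ∑ j, pderiv j (pderiv j p)

/-- The polynomial `X·X = X_1² + ⋯ + X_N²`. -/
noncomputable def XX (R : Type*) [CommRing R] (N : ℕ) : MvPolynomial (Fin N) R :=
  ∑ j, X j ^ 2

/-!
With the Euler operator `E = Σ X_j ∂_j` one has `Δ (X·X s) = X·X Δs + 4 E s + 2N s` and
`Δ E = E Δ + 2 Δ`. Hence a relation `X·X Δs + a E s + c s = 0` with `c > 0` passes to `Δs`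
with larger constants. As `Δ` is locally nilpotent, descending from a vanishing iterate gives
`Δs = 0`, and then `a E s + c s = 0` forces `s = 0`: `E` multiplies the coefficient of `X^m`
by `|m|`, and `a |m| + c` is not a zero divisor in `R`. Apply this to `p = X·X q`.
-/

namespace MvPolynomial

variable {σ R : Type*} [CommRing R]

theorem totalDegree_pderiv_le (i : σ) (p : MvPolynomial σ R) :
    (pderiv i p).totalDegree ≤ p.totalDegree - 1 := by
  refine Finset.sup_le fun m hm => ?_
  have hcoeff : coeff (m + Finsupp.single i 1) p ≠ 0 := by
    rw [mem_support_iff, coeff_pderiv] at hm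
    exact left_ne_zero_of_mul hm
  have hdeg := le_totalDegree (mem_support_iff.mpr hcoeff)
  rw [Finsupp.sum_add_index' (fun _ => rfl) (fun _ _ _ => rfl),
    Finsupp.sum_single_index rfl] at hdeg
  omega

theorem pderiv_eq_zero_of_totalDegree_eq_zero (i : σ) {p : MvPolynomial σ R}
    (hp : p.totalDegree = 0) : pderiv i p = 0 := by
  rw [totalDegree_eq_zero_iff_eq_C.mp hp, pderiv_C]

variable [Fintype σ]

variable (σ R) in
noncomputable def eulerDerivation : Derivation R (MvPolynomial σ R) (MvPolynomial σ R) :=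
  ∑ i, (X i : MvPolynomial σ R) • pderiv i

theorem eulerDerivation_apply (p : MvPolynomial σ R) :
    eulerDerivation σ R p = ∑ i, X i * pderiv i p := by
  rw [eulerDerivation, ← Derivation.coeFnAddMonoidHom_apply, map_sum, Finset.sum_apply]
  simp only [Derivation.coeFnAddMonoidHom_apply, Derivation.smul_apply, smul_eq_mul]

theorem eulerDerivation_monomial (u : σ →₀ ℕ) (a : R) :
    eulerDerivation σ R (monomial u a) = (∑ i, u i) • monomial u a := by
  simp only [eulerDerivation_apply, X_mul_pderiv_monomial, Finset.sum_smul]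

theorem coeff_eulerDerivation (m : σ →₀ ℕ) (p : MvPolynomial σ R) :
    coeff m (eulerDerivation σ R p) = (∑ i, m i) • coeff m p := by
  classical
  induction p using MvPolynomial.induction_on' with
  | monomial u a =>
    rw [eulerDerivation_monomial, coeff_smul, coeff_monomial]
    split_ifs with h <;> simp [h]
  | add p q hp hq => simp [hp, hq]

theorem eulerDerivation_X (j : σ) : eulerDerivation σ R (X j) = X j := by
  classical
  simp [eulerDerivation_apply, pderiv_X, Pi.single_apply]

theorem pderiv_eulerDerivation_commutator (k : σ) :
    ⁅pderiv (R := R) k, eulerDerivation σ R⁆ = pderiv k := by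
  classical
  refine derivation_ext fun j => ?_
  simp [Derivation.commutator_apply, eulerDerivation_X, pderiv_X, Pi.single_apply]
  split_ifs <;> simp

theorem pderiv_eulerDerivation (k : σ) (p : MvPolynomial σ R) :
    pderiv k (eulerDerivation σ R p) = eulerDerivation σ R (pderiv k p) + pderiv k p := by
  have h := congr($(pderiv_eulerDerivation_commutator (R := R) k) p)
  rw [Derivation.commutator_apply] at h
  linear_combination h

theorem eq_zero_of_nsmul_eulerDerivation_add_nsmul_eq_zero
    (hR : ∀ n : ℕ, 0 < n → (n : R) ∈ nonZeroDivisors R) {a c : ℕ} (hc : 0 < c)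
    {s : MvPolynomial σ R} (h : a • eulerDerivation σ R s + c • s = 0) : s = 0 := by
  ext m
  have hm := congr(coeff m $h)
  rw [coeff_add, coeff_smul, coeff_smul, coeff_eulerDerivation, smul_smul, ← add_smul, coeff_zero,
    nsmul_eq_mul] at hm
  exact (mul_left_mem_nonZeroDivisors_eq_zero_iff (hR _ (by positivity))).mp hm

end MvPolynomial

section Laplacian

variable {R : Type*} [CommRing R] {N : ℕ}

theorem lap_zero : lap (0 : MvPolynomial (Fin N) R) = 0 := by
  simp [lap]

theorem lap_add (p q : MvPolynomial (Fin N) R) : lap (p + q) = lap p + lap q := by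
  simp only [lap, map_add, Finset.sum_add_distrib]

theorem lap_nsmul (n : ℕ) (p : MvPolynomial (Fin N) R) : lap (n • p) = n • lap p := by
  simp only [lap, map_nsmul, Finset.smul_sum]

theorem pderiv_XX (j : Fin N) : pderiv j (XX R N) = 2 * X j := by
  classical
  simp [XX, pderiv_X, Pi.single_apply, mul_comm]

theorem lap_XX_mul (s : MvPolynomial (Fin N) R) :
    lap (XX R N * s) = XX R N * lap s + 4 • eulerDerivation (Fin N) R s + (2 * N) • s := by
  have hj : ∀ j : Fin N, pderiv j (pderiv j (XX R N * s)) =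
      XX R N * pderiv j (pderiv j s) + 4 * (X j * pderiv j s) + 2 * s := by
    intro j
    have h2 : pderiv j (2 : MvPolynomial (Fin N) R) = 0 := by
      exact_mod_cast (pderiv j).map_natCast 2
    simp only [pderiv_mul, pderiv_XX, map_add, h2, pderiv_X_self]
    ring
  simp only [lap, hj, Finset.sum_add_distrib, ← Finset.mul_sum, ← eulerDerivation_apply,
    Finset.sum_const, Finset.card_univ, Fintype.card_fin, nsmul_eq_mul]
  push_cast
  ring

theorem lap_eulerDerivation (s : MvPolynomial (Fin N) R) :
    lap (eulerDerivation (Fin N) R s) = eulerDerivation (Fin N) R (lap s) + 2 • lap s := by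
  simp only [lap, pderiv_eulerDerivation, map_add, map_sum, two_nsmul, Finset.sum_add_distrib]
  abel

theorem totalDegree_lap_le (p : MvPolynomial (Fin N) R) :
    (lap p).totalDegree ≤ p.totalDegree - 2 := by
  refine totalDegree_finsetSum_le fun j _ => ?_
  have h₁ := totalDegree_pderiv_le j p
  have h₂ := totalDegree_pderiv_le j (pderiv j p)
  omega

theorem lap_iterate_eq_zero_of_totalDegree_le {n : ℕ} {p : MvPolynomial (Fin N) R}
    (hp : p.totalDegree ≤ n) : lap^[n + 1] p = 0 := by
  induction n generalizing p with
  | zero =>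
    simp [lap, pderiv_eq_zero_of_totalDegree_eq_zero _ (Nat.le_zero.mp hp)]
  | succ n ih =>
    rw [Function.iterate_succ_apply]
    exact ih ((totalDegree_lap_le p).trans (by omega))

theorem eq_zero_of_XX_mul_lap_add_eulerDerivation_add_eq_zero
    (hR : ∀ n : ℕ, 0 < n → (n : R) ∈ nonZeroDivisors R) {n : ℕ}
    {s : MvPolynomial (Fin N) R} {a c : ℕ} (hc : 0 < c) (hs : lap^[n] s = 0)
    (h : XX R N * lap s + a • eulerDerivation (Fin N) R s + c • s = 0) : s = 0 := by
  induction n generalizing s a c with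
  | zero => exact hs
  | succ n ih =>
    have hlap : XX R N * lap (lap s) + (a + 4) • eulerDerivation (Fin N) R (lap s)
        + (c + 2 * N + 2 * a) • lap s = 0 := by
      calc _ = lap (XX R N * lap s + a • eulerDerivation (Fin N) R s + c • s) := by
            simp only [lap_add, lap_nsmul, lap_XX_mul, lap_eulerDerivation]
            module
        _ = 0 := by rw [h, lap_zero]
    have hs' : lap s = 0 := ih (by omega) (by rwa [← Function.iterate_succ_apply]) hlap
    rw [hs', mul_zero, zero_add] at h
    exact eq_zero_of_nsmul_eulerDerivation_add_nsmul_eq_zero hR hc h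

end Laplacian

/-- if positive integer multiples of `1_R` are not zero divisors, the only
harmonic multiple of `X·X` is `0`. -/
theorem stmt4 {R : Type*} [CommRing R] {N : ℕ} (hN : 2 ≤ N)
    (hR : ∀ n : ℕ, 0 < n → (n : R) ∈ nonZeroDivisors R)
    (p : MvPolynomial (Fin N) R) (hharm : lap p = 0)
    (hdvd : ∃ q : MvPolynomial (Fin N) R, p = XX R N * q) :
    p = 0 := by
  obtain ⟨q, rfl⟩ := hdvd
  have hq : XX R N * lap q + 4 • eulerDerivation (Fin N) R q + (2 * N) • q = 0 := by
    rwa [lap_XX_mul] at hharm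
  rw [eq_zero_of_XX_mul_lap_add_eulerDerivation_add_eq_zero hR (by omega)
    (lap_iterate_eq_zero_of_totalDegree_le le_rfl) hq, mul_zero]
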